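/- For all z > 0 and fixed ẑ > 0, if v = ẑ/(1+ẑ) and u = ln(1+ẑ) - (ẑ/(1+ẑ))·ln(ẑ), then v·ln(z) + u ≤ ln(1+z). -/
import Mathlib

theorem stmt_0 (zh : ℝ) (hzh : 0 < zh) (v u : ℝ)
    (hv : v = zh / (1 + zh))
    (hu : u = Real.log (1 + zh) - (zh / (1 + zh)) * Real.log zh) :
    ∀ z : ℝ, 0 < z → v * Real.log z + u ≤ Real.log (1 + z) := by
  intro z hz
  have h1 : (0:ℝ) < 1 + zh := by linarith
  set p₁ : ℝ := z * (1 + zh) / zh with hp₁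
  set p₂ : ℝ := 1 + zh with hp₂
  have hp₁pos : 0 < p₁ := by positivity
  have hw₁ : 0 ≤ v := by rw [hv]; positivity
  have hw₂ : (0:ℝ) ≤ 1 - v := by
    rw [hv]; rw [sub_nonneg, div_le_one h1]; linarith
  have hsum : v + (1 - v) = 1 := by ring
  have hmean : v * p₁ + (1 - v) * p₂ = 1 + z := by
    rw [hv, hp₁, hp₂]; field_simp; ring
  have hamgm := Real.geom_mean_le_arith_mean2_weighted hw₁ hw₂ hp₁pos.le h1.le hsum
  rw [hmean] at hamgm
  have hlog := Real.log_le_log (by positivity) hamgm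
  have hlhs : Real.log (p₁ ^ v * p₂ ^ (1 - v)) = v * Real.log z + u := by
    rw [Real.log_mul (by positivity) (by positivity),
      Real.log_rpow hp₁pos, Real.log_rpow h1, hp₁, hp₂,
      Real.log_div (by positivity) (ne_of_gt hzh),
      Real.log_mul (ne_of_gt hz) (ne_of_gt h1), hu, hv]
    ring
  linarith [hlog, hlhs.symm.le]
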